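/- Let a, b, c be the invariants a = x_{p0}x_{q0}, b = x_{p1}x_{q1}, c = x_{p0}x_{q1}+x_{p1}x_{q0} for the curve (cos θ, sin 2θ, cos 3θ) with polynomial parametrization as above. Then the 4×4 determinant of tangent directions (the stationarity determinant), after removing the factor (x_{p0}x_{q1}-x_{p1}x_{q0})⁴, is a nonzero constant multiple of (a-b)·c·(3a⁴-6a²b²+2a²c²+3b⁴+2b²c²-c⁴) when expressed in a, b, c. -/

import Mathlib

/-! A direct computation: the partial derivatives of the sextics factor into small quintics, and
the cofactor expansion of the determinant is then a polynomial identity with `k = 9216 = 2¹⁰ · 3²`. -/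

open MvPolynomial

/-- The four binary sextics parametrizing the projective closure of the curve
`(cos θ, sin 2θ, cos 3θ)`. -/
noncomputable def curveF : Fin 4 → MvPolynomial (Fin 2) ℚ :=
  ![(X 0 ^ 2 + X 1 ^ 2) ^ 3,
    (X 0 ^ 2 - X 1 ^ 2) * (X 0 ^ 2 + X 1 ^ 2) ^ 2,
    4 * (X 0 ^ 2 - X 1 ^ 2) * (X 0 ^ 2 + X 1 ^ 2) * X 0 * X 1,
    (X 0 ^ 2 - X 1 ^ 2) * (X 1 ^ 4 - 14 * X 1 ^ 2 * X 0 ^ 2 + X 0 ^ 4)]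

/-- Substitution of the variables `x_{p0}, x_{p1}` (variables `0, 1` of the
four-variable ring). -/
noncomputable def substP : MvPolynomial (Fin 2) ℚ →ₐ[ℚ] MvPolynomial (Fin 4) ℚ :=
  aeval ![X 0, X 1]

/-- Substitution of the variables `x_{q0}, x_{q1}` (variables `2, 3` of the
four-variable ring). -/
noncomputable def substQ : MvPolynomial (Fin 2) ℚ →ₐ[ℚ] MvPolynomial (Fin 4) ℚ :=
  aeval ![X 2, X 3]

/-- The 4×4 stationarity matrix whose rows are the partial derivatives
`∂F_j/∂x_{p0}`, `∂F_j/∂x_{p1}` at `x_p` and `∂F_j/∂x_{q0}`, `∂F_j/∂x_{q1}` at `x_q`. -/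
noncomputable def stationarityMatrix : Matrix (Fin 4) (Fin 4) (MvPolynomial (Fin 4) ℚ) :=
  fun i j =>
    if (i : ℕ) = 0 then substP (pderiv 0 (curveF j))
    else if (i : ℕ) = 1 then substP (pderiv 1 (curveF j))
    else if (i : ℕ) = 2 then substQ (pderiv 0 (curveF j))
    else substQ (pderiv 1 (curveF j))

/-- The curve `Φ = (a-b)·c·(3a⁴-6a²b²+2a²c²+3b⁴+2b²c²-c⁴)` of stationary
bisecants, in the invariants `a = X 0`, `b = X 1`, `c = X 2`. -/
noncomputable def Phi : MvPolynomial (Fin 3) ℚ :=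
  (X 0 - X 1) * X 2 *
    (3 * X 0 ^ 4 - 6 * X 0 ^ 2 * X 1 ^ 2 + 2 * X 0 ^ 2 * X 2 ^ 2 + 3 * X 1 ^ 4
      + 2 * X 1 ^ 2 * X 2 ^ 2 - X 2 ^ 4)
theorem MvPolynomial.pderiv_ofNat {σ R : Type*} [CommSemiring R] (i : σ) (n : ℕ)
    [n.AtLeastTwo] : pderiv i (no_index (OfNat.ofNat n) : MvPolynomial σ R) = 0 := by
  rw [← map_ofNat C n, pderiv_C]

theorem Matrix.det_fin_four {R : Type*} [CommRing R] (A : Matrix (Fin 4) (Fin 4) R) :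
    A.det =
        A 0 0 * A 1 1 * A 2 2 * A 3 3 - A 0 0 * A 1 1 * A 2 3 * A 3 2
      - A 0 0 * A 1 2 * A 2 1 * A 3 3 + A 0 0 * A 1 2 * A 2 3 * A 3 1
      + A 0 0 * A 1 3 * A 2 1 * A 3 2 - A 0 0 * A 1 3 * A 2 2 * A 3 1
      - A 0 1 * A 1 0 * A 2 2 * A 3 3 + A 0 1 * A 1 0 * A 2 3 * A 3 2
      + A 0 1 * A 1 2 * A 2 0 * A 3 3 - A 0 1 * A 1 2 * A 2 3 * A 3 0
      - A 0 1 * A 1 3 * A 2 0 * A 3 2 + A 0 1 * A 1 3 * A 2 2 * A 3 0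
      + A 0 2 * A 1 0 * A 2 1 * A 3 3 - A 0 2 * A 1 0 * A 2 3 * A 3 1
      - A 0 2 * A 1 1 * A 2 0 * A 3 3 + A 0 2 * A 1 1 * A 2 3 * A 3 0
      + A 0 2 * A 1 3 * A 2 0 * A 3 1 - A 0 2 * A 1 3 * A 2 1 * A 3 0
      - A 0 3 * A 1 0 * A 2 1 * A 3 2 + A 0 3 * A 1 0 * A 2 2 * A 3 1
      + A 0 3 * A 1 1 * A 2 0 * A 3 2 - A 0 3 * A 1 1 * A 2 2 * A 3 0
      - A 0 3 * A 1 2 * A 2 0 * A 3 1 + A 0 3 * A 1 2 * A 2 1 * A 3 0 := by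
  simp only [det_succ_row_zero (n := 3), det_fin_three, submatrix_apply, Fin.sum_univ_four,
    Fin.succAbove, Fin.reduceSucc, Fin.reduceCastSucc, Fin.reduceLT, ↓reduceIte,
    Fin.coe_ofNat_eq_mod, Nat.succ_eq_add_one, Nat.reduceAdd, Nat.reduceMod]
  ring

lemma pderiv_zero_curveF :
    (fun j => pderiv 0 (curveF j)) =
      ![6 * X 0 * (X 0 ^ 2 + X 1 ^ 2) ^ 2,
        2 * X 0 * (X 0 ^ 2 + X 1 ^ 2) * (3 * X 0 ^ 2 - X 1 ^ 2),
        4 * X 1 * (5 * X 0 ^ 4 - X 1 ^ 4),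
        6 * X 0 * (X 0 ^ 4 - 10 * X 0 ^ 2 * X 1 ^ 2 + 5 * X 1 ^ 4)] := by
  funext j
  fin_cases j <;>
    simp only [curveF, Fin.zero_eta, Fin.mk_one, Fin.reduceFinMk, Matrix.cons_val_zero,
      Matrix.cons_val_one, Matrix.cons_val, map_add, map_sub, Derivation.leibniz,
      Derivation.leibniz_pow, pderiv_X, Pi.single_eq_same, Pi.single_eq_of_ne, ne_eq,
      one_ne_zero, not_false_eq_true, pderiv_ofNat, smul_eq_mul, nsmul_eq_mul] <;>
    ring

lemma pderiv_one_curveF :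
    (fun j => pderiv 1 (curveF j)) =
      ![6 * X 1 * (X 0 ^ 2 + X 1 ^ 2) ^ 2,
        2 * X 1 * (X 0 ^ 2 + X 1 ^ 2) * (X 0 ^ 2 - 3 * X 1 ^ 2),
        4 * X 0 * (X 0 ^ 4 - 5 * X 1 ^ 4),
        -6 * X 1 * (5 * X 0 ^ 4 - 10 * X 0 ^ 2 * X 1 ^ 2 + X 1 ^ 4)] := by
  funext j
  fin_cases j <;>
    simp only [curveF, Fin.zero_eta, Fin.mk_one, Fin.reduceFinMk, Matrix.cons_val_zero,
      Matrix.cons_val_one, Matrix.cons_val, map_add, map_sub, Derivation.leibniz,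
      Derivation.leibniz_pow, pderiv_X, Pi.single_eq_same, Pi.single_eq_of_ne, ne_eq,
      zero_ne_one, not_false_eq_true, pderiv_ofNat, smul_eq_mul, nsmul_eq_mul] <;>
    ring

lemma stationarityMatrix_eq :
    stationarityMatrix =
      Matrix.of ![substP ∘ fun j => pderiv 0 (curveF j), substP ∘ fun j => pderiv 1 (curveF j),
        substQ ∘ fun j => pderiv 0 (curveF j), substQ ∘ fun j => pderiv 1 (curveF j)] := by
  ext i j
  fin_cases i <;> rfl

/-- The stationarity determinant of the curve `(cos θ, sin 2θ, cos 3θ)` equals,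
after removing the factor `(x_{p0}x_{q1} - x_{p1}x_{q0})⁴`, a nonzero constant
multiple of `(a-b)·c·(3a⁴-6a²b²+2a²c²+3b⁴+2b²c²-c⁴)` expressed in the invariants
`a = x_{p0}x_{q0}`, `b = x_{p1}x_{q1}`, `c = x_{p0}x_{q1} + x_{p1}x_{q0}`. -/
theorem stationarity_determinant_factorization :
    ∃ k : ℚ, k ≠ 0 ∧
      stationarityMatrix.det =
        C k * (X 0 * X 3 - X 1 * X 2) ^ 4 *
          aeval ![X 0 * X 2, X 1 * X 3, X 0 * X 3 + X 1 * X 2] Phi := by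
  refine ⟨9216, by norm_num, ?_⟩
  rw [stationarityMatrix_eq, pderiv_zero_curveF, pderiv_one_curveF, Matrix.det_fin_four]
  simp only [Phi, substP, substQ, Matrix.of_apply, Function.comp_apply, Matrix.cons_val_zero,
    Matrix.cons_val_one, Matrix.cons_val_two, Matrix.cons_val_three, Matrix.head_cons,
    Matrix.tail_cons, map_add, map_sub, map_mul, map_pow, map_neg, map_ofNat, aeval_X]
  ring
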